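/- arXiv:2601.18721 — 3 statements merged into one kernel-verified Lean document; each statement's English description precedes it below -/
import Mathlib

section
/- With the generalized fundamental Lagrange-Laurent polynomials L_{k,l} defined recursively by L_{k,ν_k-1} = ℓ_{k,ν_k-1} and L_{k,l}(z) = ℓ_{k,l}(z) - Σ_{s=l+1}^{ν_k-1} ℓ_{k,l}^{(s)}(z̃_k) L_{k,s}(z), where ℓ_{k,l}(z) = (z - z̃_k)^l / l! · (z̃_k/z)^p · ∏_{j≠k} ((z - z̃_j)/(z̃_k - z̃_j))^{ν_j}, the following duality holds: L_{k,l}^{(σ)}(z̃_j) = 1 if j = k and σ = l, and 0 otherwise, for all 0 ≤ j ≤ m-1 and 0 ≤ σ ≤ ν_j - 1. -/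
/-!
`ℓ_{k,l} = (z - z̃_k)^l · h` with `h(z̃_k) = 1/l!`, and `ℓ_{k,l}` vanishes to order `ν_j` at every
other node `z̃_j`; by the Leibniz rule its derivatives of order `≤ l` at `z̃_k` are `δ_{σl}`, and
those of order `< ν_j` at `z̃_j` vanish. For fixed `j, σ` the numbers `β_l = L_{k,l}^{(σ)}(z̃_j)`
therefore solve the upper unitriangular system
`β_l + ∑_{s>l} ℓ_{k,l}^{(s)}(z̃_k) β_s = ℓ_{k,l}^{(σ)}(z̃_j)`, whose unique solution is `0` when
`j ≠ k` and `δ_{σl}` when `j = k`.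
-/

open Finset Nat

theorem Nat.strong_decreasing_induction_lt {n : ℕ} {P : ℕ → Prop}
    (h : ∀ l < n, (∀ s ∈ Ico (l + 1) n, P s) → P l) (l : ℕ) (hl : l < n) : P l :=
  h l hl fun s hs => Nat.strong_decreasing_induction_lt h s (mem_Ico.1 hs).2
termination_by n - l
decreasing_by have := (mem_Ico.1 hs).1; omega

section UnitriangularSystem

variable {R : Type*} [CommRing R] {n : ℕ} {c : ℕ → ℕ → R} {α β : ℕ → R}

theorem eq_of_unitriangular_system {β' : ℕ → R}
    (hβ : ∀ l < n, β l = α l - ∑ s ∈ Ico (l + 1) n, c l s * β s)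
    (hβ' : ∀ l < n, β' l = α l - ∑ s ∈ Ico (l + 1) n, c l s * β' s) :
    ∀ l < n, β l = β' l :=
  Nat.strong_decreasing_induction_lt fun l hl ih => by
    rw [hβ l hl, hβ' l hl, sum_congr rfl fun s hs => by rw [ih s hs]]

theorem unitriangular_system_eq_zero (hα : ∀ l < n, α l = 0)
    (hβ : ∀ l < n, β l = α l - ∑ s ∈ Ico (l + 1) n, c l s * β s) :
    ∀ l < n, β l = 0 :=
  eq_of_unitriangular_system hβ fun l hl => by simp [hα l hl]

theorem unitriangular_system_eq_ite {σ : ℕ} (hσ : σ < n)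
    (hc : ∀ l, σ ≤ l → c l σ = if σ = l then 1 else 0)
    (hβ : ∀ l < n, β l = c l σ - ∑ s ∈ Ico (l + 1) n, c l s * β s) :
    ∀ l < n, β l = if σ = l then 1 else 0 := by
  refine eq_of_unitriangular_system hβ fun l hl => ?_
  simp only [mul_ite, mul_one, mul_zero, sum_ite_eq, mem_Ico]
  rcases lt_or_ge l σ with hlσ | hσl
  · simp [hlσ, hσ, hlσ.ne']
  · simp [hc l hσl, Nat.not_lt.2 hσl]

end UnitriangularSystem

def lagrangeLaurentBasis {𝕜 ι : Type*} [Field 𝕜] [Fintype ι] [DecidableEq ι]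
    (t : ι → 𝕜) (ν : ι → ℕ) (p : ℕ) (k : ι) (l : ℕ) (z : 𝕜) : 𝕜 :=
  (z - t k) ^ l / (l ! : 𝕜) * (t k / z) ^ p * ∏ j ∈ univ.erase k, ((z - t j) / (t k - t j)) ^ ν j

section Smooth

variable {𝕜 : Type*} [NontriviallyNormedField 𝕜]

theorem iteratedDeriv_sub_const_pow_self (k m : ℕ) (a : 𝕜) :
    iteratedDeriv k (fun z => (z - a) ^ m) a = if k = m then (m ! : 𝕜) else 0 := by
  rw [iteratedDeriv_comp_sub_const k (· ^ m) a]
  simpa [apply_ite] using iteratedDeriv_fun_pow_zero (𝕜 := 𝕜) (n := k) (m := m)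

theorem iteratedDeriv_sub_const_pow_mul_self {σ : ℕ} (n : ℕ) {a : 𝕜} {h : 𝕜 → 𝕜}
    (hh : ContDiffAt 𝕜 σ h a) :
    iteratedDeriv σ (fun z => (z - a) ^ n * h z) a =
      if n ≤ σ then σ.choose n * n ! * iteratedDeriv (σ - n) h a else 0 := by
  rw [iteratedDeriv_fun_mul (by fun_prop) hh]
  simp [iteratedDeriv_sub_const_pow_self]

theorem iteratedDeriv_fun_sub_sum_mul {ι : Type*} {σ : ℕ} {x : 𝕜} {f : 𝕜 → 𝕜} {g : ι → 𝕜 → 𝕜}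
    (c : ι → 𝕜) {I : Finset ι} (hf : ContDiffAt 𝕜 σ f x) (hg : ∀ i ∈ I, ContDiffAt 𝕜 σ (g i) x) :
    iteratedDeriv σ (fun z => f z - ∑ i ∈ I, c i * g i z) x =
      iteratedDeriv σ f x - ∑ i ∈ I, c i * iteratedDeriv σ (g i) x := by
  rw [iteratedDeriv_fun_sub hf (.sum fun i hi => contDiffAt_const.mul (hg i hi)),
    iteratedDeriv_fun_sum fun i hi => contDiffAt_const.mul (hg i hi)]
  simp only [iteratedDeriv_const_mul_field]

variable {ι : Type*} [Fintype ι] [DecidableEq ι] {t : ι → 𝕜} {ν : ι → ℕ} {p : ℕ} {j k : ι} {l σ : ℕ}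

theorem contDiffAt_lagrangeLaurentBasis {z : 𝕜} (hz : z ≠ 0) {N : WithTop ℕ∞} :
    ContDiffAt 𝕜 N (lagrangeLaurentBasis t ν p k l) z := by
  unfold lagrangeLaurentBasis
  fun_prop (disch := assumption)

theorem iteratedDeriv_lagrangeLaurentBasis_of_ne (hj : t j ≠ 0) (hjk : j ≠ k) (hσ : σ < ν j) :
    iteratedDeriv σ (lagrangeLaurentBasis t ν p k l) (t j) = 0 := by
  have hsplit : lagrangeLaurentBasis t ν p k l = fun z => (z - t j) ^ ν j *
      ((t k - t j)⁻¹ ^ ν j * ((z - t k) ^ l / l ! * (t k / z) ^ p *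
        ∏ i ∈ (univ.erase k).erase j, ((z - t i) / (t k - t i)) ^ ν i)) := by
    funext z
    rw [lagrangeLaurentBasis, ← mul_prod_erase _ _ (mem_erase.2 ⟨hjk, mem_univ j⟩),
      div_eq_mul_inv (z - t j), mul_pow]
    ring
  rw [hsplit, iteratedDeriv_sub_const_pow_mul_self _ (by fun_prop (disch := assumption)),
    if_neg (by omega)]

theorem iteratedDeriv_lagrangeLaurentBasis_self [CharZero 𝕜] (ht : Function.Injective t)
    (hk : t k ≠ 0) (hσ : σ ≤ l) :
    iteratedDeriv σ (lagrangeLaurentBasis t ν p k l) (t k) = if σ = l then 1 else 0 := by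
  have hsplit : lagrangeLaurentBasis t ν p k l = fun z => (z - t k) ^ l *
      ((l ! : 𝕜)⁻¹ * ((t k / z) ^ p * ∏ i ∈ univ.erase k, ((z - t i) / (t k - t i)) ^ ν i)) := by
    funext z
    simp only [lagrangeLaurentBasis]
    ring
  rw [hsplit, iteratedDeriv_sub_const_pow_mul_self _ (by fun_prop (disch := assumption))]
  rcases hσ.lt_or_eq with hlt | rfl
  · simp [hlt.not_ge, hlt.ne]
  · have hprod : ∏ i ∈ univ.erase k, ((t k - t i) / (t k - t i)) ^ ν i = 1 :=
      prod_eq_one fun i hi => by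
        rw [div_self (sub_ne_zero.2 (ht.ne (ne_of_mem_erase hi).symm)), one_pow]
    simp [div_self hk, hprod, factorial_ne_zero]

end Smooth

theorem generalized_lagrange_laurent_duality_general
    (m p : ℕ) (t : Fin m → ℂ) (ht : Function.Injective t) (ht0 : ∀ k, t k ≠ 0)
    (ν : Fin m → ℕ)
    (ℓ : Fin m → ℕ → ℂ → ℂ)
    (hℓ : ∀ k l, ℓ k l = fun z =>
      (z - t k) ^ l / (Nat.factorial l : ℂ) * (t k / z) ^ p *
        ∏ j ∈ Finset.univ.erase k, ((z - t j) / (t k - t j)) ^ (ν j))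
    (L : Fin m → ℕ → ℂ → ℂ)
    (hL : ∀ k l, l < ν k → L k l = fun z =>
      ℓ k l z - ∑ s ∈ Finset.Ico (l + 1) (ν k), iteratedDeriv s (ℓ k l) (t k) * L k s z) :
    ∀ (j k : Fin m) (σ l : ℕ), σ < ν j → l < ν k →
      iteratedDeriv σ (L k l) (t j) = if j = k ∧ σ = l then 1 else 0 := by
  obtain rfl : ℓ = lagrangeLaurentBasis t ν p := funext₂ hℓ
  have hL_smooth (k : Fin m) : ∀ l < ν k, ∀ (N : ℕ) z, z ≠ 0 → ContDiffAt ℂ N (L k l) z :=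
    Nat.strong_decreasing_induction_lt fun l hl ih N z hz => by
      rw [hL k l hl]
      exact (contDiffAt_lagrangeLaurentBasis hz).sub
        (ContDiffAt.sum fun s hs => contDiffAt_const.mul (ih s hs N z hz))
  have hrec (j k : Fin m) (σ : ℕ) : ∀ l < ν k, iteratedDeriv σ (L k l) (t j) =
      iteratedDeriv σ (lagrangeLaurentBasis t ν p k l) (t j) - ∑ s ∈ Ico (l + 1) (ν k),
        iteratedDeriv s (lagrangeLaurentBasis t ν p k l) (t k) * iteratedDeriv σ (L k s) (t j) := by
    intro l hl
    rw [hL k l hl]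
    exact iteratedDeriv_fun_sub_sum_mul _ (contDiffAt_lagrangeLaurentBasis (ht0 j))
      fun s hs => hL_smooth k s (mem_Ico.1 hs).2 σ _ (ht0 j)
  intro j k σ l hσ hl
  by_cases hjk : j = k
  · subst hjk
    simpa using unitriangular_system_eq_ite hσ
      (c := fun l s => iteratedDeriv s (lagrangeLaurentBasis t ν p j l) (t j))
      (fun l hσl => iteratedDeriv_lagrangeLaurentBasis_self ht (ht0 j) hσl) (hrec j j σ) l hl
  · simpa [hjk] using unitriangular_system_eq_zero
      (fun l _ => iteratedDeriv_lagrangeLaurentBasis_of_ne (ht0 j) hjk hσ) (hrec j k σ) l hl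

/-- The generalized fundamental Lagrange–Laurent polynomials
`L_{k,l}`, defined by the backward recursion
`L_{k,l} = ℓ_{k,l} - ∑_{s=l+1}^{ν_k-1} ℓ_{k,l}^{(s)}(z̃_k) L_{k,s}`
(with `L_{k,ν_k-1} = ℓ_{k,ν_k-1}`, the empty-sum case), where
`ℓ_{k,l}(z) = (z-z̃_k)^l/l! · (z̃_k/z)^p · ∏_{j≠k} ((z-z̃_j)/(z̃_k-z̃_j))^{ν_j}`,
satisfy the duality `L_{k,l}^{(σ)}(z̃_j) = δ_{jk} δ_{σl}` for all
`0 ≤ σ ≤ ν_j - 1`. -/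
theorem generalized_lagrange_laurent_duality
    (m r p : ℕ) (t : Fin m → ℂ) (ht : Function.Injective t) (ht0 : ∀ k, t k ≠ 0)
    (ν : Fin m → ℕ) (hν : ∀ k, 0 < ν k)
    (hr : r = ∑ k, ν k) (hp : p + 1 ≤ r)
    (ℓ : Fin m → ℕ → ℂ → ℂ)
    (hℓ : ∀ k l, ℓ k l = fun z =>
      (z - t k) ^ l / (Nat.factorial l : ℂ) * (t k / z) ^ p *
        ∏ j ∈ Finset.univ.erase k, ((z - t j) / (t k - t j)) ^ (ν j))
    (L : Fin m → ℕ → ℂ → ℂ)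
    (hL : ∀ k l, l < ν k → L k l = fun z =>
      ℓ k l z - ∑ s ∈ Finset.Ico (l + 1) (ν k), iteratedDeriv s (ℓ k l) (t k) * L k s z) :
    ∀ (j k : Fin m) (σ l : ℕ), σ < ν j → l < ν k →
      iteratedDeriv σ (L k l) (t j) = if j = k ∧ σ = l then 1 else 0 :=
  generalized_lagrange_laurent_duality_general m p t ht ht0 ν ℓ hℓ L hL
end

section
/- Let q ∈ (0,1) and define ρ_n(z) = Σ_{j=0}^n (-1)^{n-j} [n choose j]_q q^{(n-j)/2} z^j, where [n choose j]_q is the q-binomial coefficient. Then these polynomials satisfy the Szegő forward recurrence ρ_n(z) = z ρ_{n-1}(z) + δ_n ρ_{n-1}^*(z) with Verblunsky coefficients δ_n = ρ_n(0) = (-1)^n q^{n/2}. -/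
/-- The `q`-binomial coefficient `[n choose j]_q = ∏_{i=1}^j (1-q^{n-j+i})/(1-q^i)`. -/
noncomputable def qBinom (q : ℝ) (n j : ℕ) : ℝ :=
  ∏ i ∈ Finset.range j, (1 - q ^ (n - j + i + 1)) / (1 - q ^ (i + 1))

/-- The Rogers–Szegő monic polynomial
`ρ_n(z) = ∑_{j=0}^n (-1)^{n-j} [n choose j]_q q^{(n-j)/2} z^j`, as a function. -/
noncomputable def rsPoly (q : ℝ) (n : ℕ) : ℂ → ℂ := fun z =>
  ∑ j ∈ Finset.range (n + 1),
    ((-1 : ℂ)) ^ (n - j) * ((qBinom q n j : ℝ) : ℂ) *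
      (((q ^ (((n - j : ℕ) : ℝ) / 2) : ℝ)) : ℂ) * z ^ j

/-! Write `s = √q`, so that the coefficient of `z^j` in `ρ_n` is `[n choose j]_q (-s)^{n-j}` and
`δ_n = (-s)^n`. The coefficients of `ρ_m^*` are those of `ρ_m` reversed, and by the symmetry
`[m choose m-j]_q = [m choose j]_q`, comparing coefficients of `z^{j+1}` in the recurrence
for `ρ_{m+1}` reduces it to the `q`-Pascal rule `[m+1 choose j+1]_q = [m choose j]_q + q^{j+1} [m choose j+1]_q`,
since `(-s)^{m+1} (-s)^{j+1} = q^{j+1} (-s)^{m-j}`. -/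

open Finset

namespace Finset

variable {R : Type*} [CommRing R]

theorem sum_range_succ_succ_eq_mul_sum_add_mul_sum_reflect {a b : ℕ → R} {m : ℕ} (δ z : R)
    (h_zero : a 0 = δ * b m) (h_top : a (m + 1) = b m)
    (h_mid : ∀ j < m, a (j + 1) = b j + δ * b (m - (j + 1))) :
    ∑ j ∈ range (m + 2), a j * z ^ j =
      z * ∑ j ∈ range (m + 1), b j * z ^ j + δ * ∑ j ∈ range (m + 1), b (m - j) * z ^ j := by
  have h_mid_sum : ∑ j ∈ range m, a (j + 1) * z ^ (j + 1) =
      ∑ j ∈ range m, (z * (b j * z ^ j) + δ * (b (m - (j + 1)) * z ^ (j + 1))) :=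
    sum_congr rfl fun j hj => by rw [h_mid j (mem_range.mp hj)]; ring
  rw [sum_range_succ', sum_range_succ, h_mid_sum, sum_add_distrib, mul_sum, mul_sum,
    sum_range_succ, sum_range_succ' (fun j => δ * (b (m - j) * z ^ j)), h_zero, h_top]
  simp only [Nat.sub_zero, pow_zero, mul_one]
  ring

theorem pow_mul_sum_inv_pow_eq_sum_reflect {K : Type*} [Field K] (c : ℕ → K) {z : K}
    (hz : z ≠ 0) (m : ℕ) :
    z ^ m * ∑ j ∈ range (m + 1), c j * z⁻¹ ^ j = ∑ j ∈ range (m + 1), c (m - j) * z ^ j := by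
  rw [← sum_range_reflect (fun j => c (m - j) * z ^ j), mul_sum]
  refine sum_congr rfl fun j hj => ?_
  have hj : j ≤ m := Nat.lt_succ_iff.mp (mem_range.mp hj)
  rw [Nat.add_sub_cancel, Nat.sub_sub_self hj, pow_sub₀ z hz hj, inv_pow]
  ring

end Finset

section QBinomial

variable {q : ℝ}

theorem one_sub_pow_ne_zero (hq : |q| ≠ 1) {k : ℕ} (hk : k ≠ 0) : 1 - q ^ k ≠ 0 := by
  intro h
  have : |q| ^ k = 1 := by rw [← abs_pow, ← sub_eq_zero.mp h, abs_one]
  exact hq ((pow_eq_one_iff_of_nonneg (abs_nonneg q) hk).mp this)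

/-- `(q; q)_n = ∏_{i=1}^n (1 - q^i)`. -/
noncomputable def qPochhammer (q : ℝ) (n : ℕ) : ℝ := ∏ i ∈ range n, (1 - q ^ (i + 1))

theorem qPochhammer_succ (q : ℝ) (n : ℕ) :
    qPochhammer q (n + 1) = qPochhammer q n * (1 - q ^ (n + 1)) :=
  prod_range_succ _ n

theorem qPochhammer_ne_zero (hq : |q| ≠ 1) (n : ℕ) : qPochhammer q n ≠ 0 :=
  prod_ne_zero_iff.mpr fun i _ => one_sub_pow_ne_zero hq i.succ_ne_zero

theorem qBinom_add_eq_qPochhammer_div (hq : |q| ≠ 1) (a b : ℕ) :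
    qBinom q (a + b) b = qPochhammer q (a + b) / (qPochhammer q a * qPochhammer q b) := by
  have h_split : qPochhammer q (a + b) = qPochhammer q a * ∏ i ∈ range b, (1 - q ^ (a + i + 1)) :=
    prod_range_add _ a b
  rw [qBinom, prod_div_distrib, Nat.add_sub_cancel, h_split, ← qPochhammer,
    mul_div_mul_left _ _ (qPochhammer_ne_zero hq a)]

theorem qBinom_eq_qPochhammer_div (hq : |q| ≠ 1) {n j : ℕ} (h : j ≤ n) :
    qBinom q n j = qPochhammer q n / (qPochhammer q (n - j) * qPochhammer q j) := by
  obtain ⟨a, rfl⟩ := Nat.exists_eq_add_of_le' h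
  rw [qBinom_add_eq_qPochhammer_div hq, Nat.add_sub_cancel]

theorem qBinom_zero (q : ℝ) (n : ℕ) : qBinom q n 0 = 1 := by
  simp [qBinom]

theorem qBinom_self (hq : |q| ≠ 1) (n : ℕ) : qBinom q n n = 1 := by
  rw [qBinom_eq_qPochhammer_div hq le_rfl, Nat.sub_self,
    show qPochhammer q 0 = 1 from prod_range_zero _, one_mul,
    div_self (qPochhammer_ne_zero hq n)]

theorem qBinom_symm (hq : |q| ≠ 1) {n j : ℕ} (h : j ≤ n) :
    qBinom q n (n - j) = qBinom q n j := by
  rw [qBinom_eq_qPochhammer_div hq (Nat.sub_le n j), qBinom_eq_qPochhammer_div hq h,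
    Nat.sub_sub_self h, mul_comm]

theorem qBinom_succ_succ (hq : |q| ≠ 1) {m j : ℕ} (h : j < m) :
    qBinom q (m + 1) (j + 1) = qBinom q m j + q ^ (j + 1) * qBinom q m (j + 1) := by
  obtain ⟨k, rfl⟩ := Nat.exists_eq_add_of_lt h
  rw [qBinom_eq_qPochhammer_div hq (by omega), qBinom_eq_qPochhammer_div hq (by omega),
    qBinom_eq_qPochhammer_div hq (by omega), show j + k + 1 + 1 - (j + 1) = k + 1 by omega,
    show j + k + 1 - j = k + 1 by omega, show j + k + 1 - (j + 1) = k by omega,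
    qPochhammer_succ q (j + k + 1), qPochhammer_succ q k, qPochhammer_succ q j]
  have := qPochhammer_ne_zero hq k
  have := qPochhammer_ne_zero hq j
  have := one_sub_pow_ne_zero hq (Nat.succ_ne_zero k)
  have := one_sub_pow_ne_zero hq (Nat.succ_ne_zero j)
  field_simp
  ring

end QBinomial

section RogersSzego

variable {q : ℝ}

/-- The coefficient of `z^j` in `ρ_n`, with `(-1)^{n-j} q^{(n-j)/2}` written as `(-√q)^{n-j}`. -/
noncomputable def rsCoeff (q : ℝ) (n j : ℕ) : ℝ := qBinom q n j * (-√q) ^ (n - j)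

theorem neg_one_pow_mul_rpow_div_two (hq : 0 ≤ q) (n : ℕ) :
    (-1 : ℂ) ^ n * ((q ^ ((n : ℝ) / 2) : ℝ) : ℂ) = (((-√q) ^ n : ℝ) : ℂ) := by
  rw [Real.rpow_div_two_eq_sqrt _ hq, Real.rpow_natCast]
  push_cast
  ring

theorem rsPoly_eq_sum (hq : 0 ≤ q) (n : ℕ) (z : ℂ) :
    rsPoly q n z = ∑ j ∈ range (n + 1), (rsCoeff q n j : ℂ) * z ^ j := by
  refine sum_congr rfl fun j _ => ?_
  rw [mul_comm ((-1 : ℂ) ^ (n - j)), mul_assoc _ ((-1 : ℂ) ^ (n - j)),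
    neg_one_pow_mul_rpow_div_two hq, rsCoeff]
  push_cast
  rfl

theorem rsCoeff_zero (q : ℝ) (n : ℕ) : rsCoeff q n 0 = (-√q) ^ n := by
  rw [rsCoeff, qBinom_zero, one_mul, Nat.sub_zero]

theorem rsPoly_apply_zero (hq : 0 ≤ q) (n : ℕ) : rsPoly q n 0 = (((-√q) ^ n : ℝ) : ℂ) := by
  rw [rsPoly_eq_sum hq, sum_range_succ', sum_eq_zero fun j _ => by simp, zero_add, pow_zero,
    mul_one, rsCoeff_zero]

theorem rsCoeff_self (hq : |q| ≠ 1) (n : ℕ) : rsCoeff q n n = 1 := by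
  rw [rsCoeff, qBinom_self hq, Nat.sub_self, pow_zero, one_mul]

theorem rsCoeff_succ_succ (hq₀ : 0 ≤ q) (hq : |q| ≠ 1) {m j : ℕ} (h : j < m) :
    rsCoeff q (m + 1) (j + 1) = rsCoeff q m j + (-√q) ^ (m + 1) * rsCoeff q m (m - (j + 1)) := by
  rw [rsCoeff, rsCoeff, rsCoeff, qBinom_symm hq h, qBinom_succ_succ hq h]
  obtain ⟨k, rfl⟩ := Nat.exists_eq_add_of_lt h
  rw [show j + k + 1 + 1 - (j + 1) = k + 1 by omega, show j + k + 1 - j = k + 1 by omega,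
    show j + k + 1 - (j + k + 1 - (j + 1)) = j + 1 by omega]
  have h_sq : q ^ (j + 1) = (-√q) ^ (2 * (j + 1)) := by
    rw [pow_mul, neg_sq, Real.sq_sqrt hq₀]
  linear_combination qBinom q (j + k + 1) (j + 1) * (-√q) ^ (k + 1) * h_sq

end RogersSzego

/-- The Rogers–Szegő polynomials satisfy the Szegő forward
recurrence `ρ_n(z) = z ρ_{n-1}(z) + δ_n ρ_{n-1}^*(z)` with Verblunsky
coefficients `δ_n = ρ_n(0) = (-1)^n q^{n/2}`, where (the coefficients being
real) `ρ_{n-1}^*(z) = z^{n-1} ρ_{n-1}(1/z)`. -/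
theorem rogers_szego_recurrence (q : ℝ) (hq : q ∈ Set.Ioo (0 : ℝ) 1)
    (n : ℕ) (hn : 1 ≤ n) :
    (∀ z : ℂ, z ≠ 0 →
      rsPoly q n z = z * rsPoly q (n - 1) z +
        ((-1 : ℂ) ^ n * (((q ^ ((n : ℝ) / 2) : ℝ)) : ℂ)) *
          (z ^ (n - 1) * rsPoly q (n - 1) z⁻¹)) ∧
    rsPoly q n 0 = (-1 : ℂ) ^ n * (((q ^ ((n : ℝ) / 2) : ℝ)) : ℂ) := by
  have hq₀ : 0 ≤ q := hq.1.le
  have hq₁ : |q| ≠ 1 := by rw [abs_of_pos hq.1]; exact hq.2.ne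
  rw [neg_one_pow_mul_rpow_div_two hq₀]
  refine ⟨fun z hz => ?_, rsPoly_apply_zero hq₀ n⟩
  obtain ⟨m, rfl⟩ := Nat.exists_eq_add_of_le' hn
  simp only [rsPoly_eq_sum hq₀, Nat.add_sub_cancel, pow_mul_sum_inv_pow_eq_sum_reflect _ hz]
  apply sum_range_succ_succ_eq_mul_sum_add_mul_sum_reflect
  · rw [rsCoeff_zero, rsCoeff_self hq₁, Complex.ofReal_one, mul_one]
  · rw [rsCoeff_self hq₁, rsCoeff_self hq₁]
  · intro j hj
    exact_mod_cast rsCoeff_succ_succ hq₀ hq₁ hj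
end

section
/- Let q ∈ (0,1), N = 2ℓ+1, and let z_j = e^{i(θ_0 + 2πj/N)}, j = 0,...,N-1, be the zeros of z^N - τ with τ = e^{iNθ_0}. If the quadrature rule Σ_j λ_j F(z_j) is exact for all F ∈ Λ_{-ℓ,ℓ} for the Rogers-Szegő weight (with moments μ_k = q^{k²/2}), then the weights are λ_j = (1/N)[1 + 2 Σ_{k=1}^{ℓ} q^{k²/2} cos((θ_0 + 2πj/N)k)]; in particular all λ_j are real. -/
/-!
The nodes are `z_j = e^{iθ₀} ζ^j` with `ζ = e^{2πi/N}` a primitive `N`-th root of unity, so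
`∑_{|k| ≤ ℓ} (z_i / z_j)^k = N δ_{ij}`: the `N` consecutive powers of a nontrivial `N`-th root
of unity sum to zero. Multiplying the exactness conditions by `z_j^{-k}` and summing over
`|k| ≤ ℓ` therefore isolates `N λ_j = ∑_{|k| ≤ ℓ} μ_k e^{-ikθ_j}`, and pairing `k` with `-k` in
this sum turns it into the cosine sum, since the moments are even in `k`.
-/

open Real Finset

theorem sum_Icc_neg_eq_add_sum_Icc_one {M : Type*} [AddCommMonoid M] (f : ℤ → M) (ℓ : ℕ) :
    ∑ k ∈ Icc (-ℓ : ℤ) ℓ, f k = f 0 + ∑ k ∈ Icc 1 ℓ, (f k + f (-k)) := by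
  induction ℓ with
  | zero => simp
  | succ n ih =>
    have hIcc : Icc (-(n + 1 : ℕ) : ℤ) (n + 1 : ℕ) =
        insert (-(n + 1 : ℕ) : ℤ) (insert ((n + 1 : ℕ) : ℤ) (Icc (-n : ℤ) n)) := by
      ext x; simp only [mem_Icc, mem_insert]; omega
    rw [hIcc, sum_insert (by simp only [mem_insert, mem_Icc]; omega),
      sum_insert (by simp only [mem_Icc]; omega), ih, sum_Icc_succ_top (by omega)]
    abel

theorem sum_Icc_neg_zpow_eq_zero {K : Type*} [DivisionRing K] {w : K} (hw : w ≠ 1) {ℓ : ℕ}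
    (hwN : w ^ (2 * ℓ + 1) = 1) : ∑ k ∈ Icc (-ℓ : ℤ) ℓ, w ^ k = 0 := by
  have hw0 : w ≠ 0 := by rintro rfl; simp at hwN
  rw [Int.Icc_eq_finset_map, sum_map]
  simp only [Function.Embedding.trans_apply, Nat.castEmbedding_apply, addLeftEmbedding_apply,
    zpow_add₀ hw0, zpow_natCast, ← mul_sum]
  rw [show ((ℓ : ℤ) + 1 - -ℓ).toNat = 2 * ℓ + 1 by omega, geom_sum_eq hw, hwN]
  simp

theorem IsPrimitiveRoot.sum_Icc_neg_zpow_div_eq {K : Type*} [Field K] {ℓ : ℕ} {ζ : K}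
    (hζ : IsPrimitiveRoot ζ (2 * ℓ + 1)) {c : K} (hc : c ≠ 0) (i j : Fin (2 * ℓ + 1)) :
    ∑ k ∈ Icc (-ℓ : ℤ) ℓ, (c * ζ ^ (i : ℕ) / (c * ζ ^ (j : ℕ))) ^ k =
      if i = j then ((2 * ℓ + 1 : ℕ) : K) else 0 := by
  have hζ0 : ζ ≠ 0 := hζ.ne_zero (by omega)
  have hratio : c * ζ ^ (i : ℕ) / (c * ζ ^ (j : ℕ)) = ζ ^ ((i : ℤ) - j) := by
    rw [mul_div_mul_left _ _ hc, zpow_sub₀ hζ0, zpow_natCast, zpow_natCast]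
  rw [hratio]
  split_ifs with hij
  · subst hij
    simp only [sub_self, zpow_zero, one_zpow, sum_const, Int.card_Icc, nsmul_eq_mul, mul_one]
    rw [show ((ℓ : ℤ) + 1 - -ℓ).toNat = 2 * ℓ + 1 by omega]
  · apply sum_Icc_neg_zpow_eq_zero
    · rw [Ne, hζ.zpow_eq_one_iff_dvd]
      intro hdvd
      refine hij (Fin.ext ?_)
      have := Int.eq_zero_of_abs_lt_dvd hdvd (by rw [abs_lt]; omega)
      omega
    · rw [← zpow_natCast, ← zpow_mul, mul_comm, zpow_mul, zpow_natCast, hζ.pow_eq_one, one_zpow]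

theorem natCast_mul_eq_sum_mul_zpow_neg_of_orthogonal {K : Type*} [Field K] {N : ℕ}
    (z : Fin N → K) (S : Finset ℤ)
    (hortho : ∀ i j, ∑ k ∈ S, (z i / z j) ^ k = if i = j then (N : K) else 0)
    (lam : Fin N → K) (m : ℤ → K) (hexact : ∀ k ∈ S, ∑ i, lam i * z i ^ k = m k) (j : Fin N) :
    N * lam j = ∑ k ∈ S, m k * z j ^ (-k) := calc
  N * lam j = ∑ i, lam i * if i = j then (N : K) else 0 := by simp [mul_comm]
  _ = ∑ i, ∑ k ∈ S, lam i * z i ^ k * z j ^ (-k) := by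
    simp only [← hortho, mul_sum, div_eq_mul_inv, mul_zpow, inv_zpow, zpow_neg, mul_assoc]
  _ = ∑ k ∈ S, m k * z j ^ (-k) := by
    rw [sum_comm]
    exact sum_congr rfl fun k hk => by rw [← hexact k hk, sum_mul]

theorem sum_Icc_neg_mul_exp_zpow_neg {a : ℤ → ℝ} (ha : ∀ k, a (-k) = a k) (ℓ : ℕ) (θ : ℝ) :
    ∑ k ∈ Icc (-ℓ : ℤ) ℓ, (a k : ℂ) * Complex.exp (θ * Complex.I) ^ (-k) =
      ((a 0 + 2 * ∑ k ∈ Icc 1 ℓ, a k * Real.cos (θ * k) : ℝ) : ℂ) := by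
  rw [sum_Icc_neg_eq_add_sum_Icc_one]
  push_cast
  congr 1
  · simp
  rw [mul_sum]
  refine sum_congr rfl fun k _ => ?_
  rw [neg_neg, ha, ← Complex.exp_int_mul, ← Complex.exp_int_mul, ← mul_add,
    ← mul_left_comm _ (2 : ℂ), Complex.two_cos, add_comm]
  congr 3 <;> push_cast <;> ring

theorem Complex.exp_add_two_pi_mul_div_mul_I (θ₀ : ℝ) (N j : ℕ) :
    Complex.exp (↑(θ₀ + 2 * π * j / N) * Complex.I) =
      Complex.exp (θ₀ * Complex.I) * Complex.exp (2 * π * Complex.I / N) ^ j := by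
  rw [← Complex.exp_nat_mul, ← Complex.exp_add]
  push_cast
  ring_nf

theorem interpolatory_weights_odd_general (q : ℝ)
    (ℓ N : ℕ) (hN : N = 2 * ℓ + 1) (θ0 : ℝ)
    (z : Fin N → ℂ)
    (hz : ∀ j, z j = Complex.exp ((↑(θ0 + 2 * π * (j : ℕ) / N) : ℂ) * Complex.I))
    (lam : Fin N → ℂ)
    (hexact : ∀ k : ℤ, k.natAbs ≤ ℓ →
      (∑ j, lam j * (z j) ^ k) = ((q ^ (((k : ℝ) ^ 2) / 2) : ℝ) : ℂ)) :
    ∀ j : Fin N, lam j =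
      ((((1 + 2 * ∑ k ∈ Finset.Icc 1 ℓ,
          q ^ (((k : ℝ) ^ 2) / 2) * Real.cos ((θ0 + 2 * π * (j : ℕ) / N) * k)) / N : ℝ)) : ℂ) := by
  subst hN
  intro j
  have hζ := Complex.isPrimitiveRoot_exp (2 * ℓ + 1) (by omega)
  have hortho (i j : Fin (2 * ℓ + 1)) : ∑ k ∈ Icc (-ℓ : ℤ) ℓ, (z i / z j) ^ k =
      if i = j then ((2 * ℓ + 1 : ℕ) : ℂ) else 0 := by
    simp only [hz, Complex.exp_add_two_pi_mul_div_mul_I]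
    exact hζ.sum_Icc_neg_zpow_div_eq (Complex.exp_ne_zero _) i j
  have hinv := natCast_mul_eq_sum_mul_zpow_neg_of_orthogonal z _ hortho lam
    (fun k : ℤ => ((q ^ ((k : ℝ) ^ 2 / 2) : ℝ) : ℂ))
    (fun k hk => hexact k (by rw [mem_Icc] at hk; omega)) j
  rw [hz, sum_Icc_neg_mul_exp_zpow_neg (fun k => by simp only [Int.cast_neg, neg_sq])] at hinv
  simp only [Int.cast_zero, Int.cast_natCast, zero_pow two_ne_zero, zero_div, rpow_zero] at hinv
  rw [Complex.ofReal_div, Complex.ofReal_natCast, eq_div_iff (Nat.cast_ne_zero.mpr (by omega)),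
    mul_comm, hinv]

/-- For the Rogers–Szegő moments `μ_k = q^{k²/2}` and `N = 2ℓ+1`
equally spaced nodes `z_j = e^{i(θ_0 + 2πj/N)}` (the zeros of `z^N - e^{iNθ_0}`),
if `∑_j λ_j F(z_j)` is exact on `Λ_{-ℓ,ℓ}`, then
`λ_j = (1/N)[1 + 2 ∑_{k=1}^ℓ q^{k²/2} cos((θ_0 + 2πj/N)k)]`; in particular all
weights are real. -/
theorem interpolatory_weights_odd (q : ℝ) (hq : q ∈ Set.Ioo (0 : ℝ) 1)
    (ℓ N : ℕ) (hN : N = 2 * ℓ + 1) (θ0 : ℝ)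
    (z : Fin N → ℂ)
    (hz : ∀ j, z j = Complex.exp ((↑(θ0 + 2 * π * (j : ℕ) / N) : ℂ) * Complex.I))
    (lam : Fin N → ℂ)
    (hexact : ∀ k : ℤ, k.natAbs ≤ ℓ →
      (∑ j, lam j * (z j) ^ k) = ((q ^ (((k : ℝ) ^ 2) / 2) : ℝ) : ℂ)) :
    ∀ j : Fin N, lam j =
      ((((1 + 2 * ∑ k ∈ Finset.Icc 1 ℓ,
          q ^ (((k : ℝ) ^ 2) / 2) * Real.cos ((θ0 + 2 * π * (j : ℕ) / N) * k)) / N : ℝ)) : ℂ) :=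
  interpolatory_weights_odd_general q ℓ N hN θ0 z hz lam hexact
end
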